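/- Let Y = (ĉ, âˡ, âʳ)_T be a triangular fuzzy variable with âˡ < ĉ < 0 < âʳ and âʳ ≤ −ĉ, and let ν(z) = sup{μ_Y(y) : y ∈ ℝ, y² = z} be the possibility distribution of Y². Then the credibility Cr{Y² ≥ r} = (1/2)(1 − sup_{t ≤ r} ν(t) + sup_{t ≥ r} ν(t)) satisfies: Cr{Y² ≥ r} = (1/2)(2 − ν(r)) if 0 ≤ r ≤ ĉ²; Cr{Y² ≥ r} = (1/2)ν(r) if ĉ² ≤ r ≤ (âˡ)²; and Cr{Y² ≥ r} = 0 if r > (âˡ)². -/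
import Mathlib


/-- Credibility of `{Y² ≥ r}` for a triangular fuzzy variable
`Y = (ĉ, âˡ, âʳ)_T` with `âˡ < ĉ < 0 < âʳ` and `âʳ ≤ −ĉ`. -/
theorem stmt_19 (al c ar : ℝ) (h₁ : al < c) (h₂ : c < 0) (h₃ : 0 < ar)
    (h₄ : ar ≤ -c)
    (μ : ℝ → ℝ)
    (hμ : ∀ y, μ y =
      if al ≤ y ∧ y ≤ c then (y - al) / (c - al)
      else if c ≤ y ∧ y ≤ ar then (ar - y) / (ar - c)
      else 0)
    (ν : ℝ → ℝ)
    (hν : ∀ z, ν z = sSup (μ '' {y : ℝ | y ^ 2 = z}))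
    (Cr : ℝ → ℝ)
    (hCr : ∀ r, Cr r =
      (1 / 2) * (1 - sSup (ν '' {t : ℝ | t ≤ r}) + sSup (ν '' {t : ℝ | r ≤ t}))) :
    ∀ r : ℝ,
      (0 ≤ r → r ≤ c ^ 2 → Cr r = (1 / 2) * (2 - ν r)) ∧
      (c ^ 2 ≤ r → r ≤ al ^ 2 → Cr r = (1 / 2) * ν r) ∧
      (al ^ 2 < r → Cr r = 0) := by
  have hca : (0:ℝ) < c - al := by linarith
  have hrc : (0:ℝ) < ar - c := by linarith
  have hc2al2 : c ^ 2 ≤ al ^ 2 := by nlinarith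
  have hsqc : Real.sqrt (c ^ 2) = -c := by
    rw [Real.sqrt_sq_eq_abs, abs_of_neg h₂]
  have hsqal : Real.sqrt (al ^ 2) = -al := by
    rw [Real.sqrt_sq_eq_abs, abs_of_neg (h₁.trans h₂)]
  have hμnn : ∀ y, 0 ≤ μ y := by
    intro y
    rw [hμ]
    split_ifs with ha hb
    · exact div_nonneg (by linarith [ha.1]) hca.le
    · exact div_nonneg (by linarith [hb.2]) hrc.le
    · exact le_rfl
  -- ν vanishes for negative arguments
  have hν0 : ∀ z : ℝ, z < 0 → ν z = 0 := by
    intro z hz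
    rw [hν]
    have : {y : ℝ | y ^ 2 = z} = ∅ := by
      ext y; simp only [Set.mem_setOf_eq, Set.mem_empty_iff_false, iff_false]
      intro h; nlinarith [sq_nonneg y]
    rw [this, Set.image_empty, Real.sSup_empty]
  -- ν z = μ (-√z) for z ≥ 0
  have hkey : ∀ s : ℝ, 0 ≤ s → μ s ≤ μ (-s) := by
    intro s hs
    rcases le_or_gt s ar with hsar | hsar
    · have hms : μ s = (ar - s) / (ar - c) := by
        rw [hμ, if_neg (by intro h; linarith [h.2]), if_pos ⟨by linarith, hsar⟩]
      rcases le_or_gt (-s) c with hsc | hsc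
      · have hseq : s = ar := by linarith
        have hm2 : μ (-s) = (-s - al) / (c - al) := by
          rw [hμ, if_pos ⟨by linarith, hsc⟩]
        rw [hms, hm2, hseq]
        have e : (ar - ar) / (ar - c) = 0 := by simp
        rw [e]
        exact div_nonneg (by linarith) hca.le
      · have hm2 : μ (-s) = (ar - -s) / (ar - c) := by
          rw [hμ, if_neg (by intro h; linarith [h.2]), if_pos ⟨by linarith, by linarith⟩]
        rw [hms, hm2, div_le_div_iff₀ hrc hrc]
        nlinarith
    · have hms : μ s = 0 := by
        rw [hμ, if_neg (by intro h; linarith [h.2]), if_neg (by intro h; linarith [h.2])]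
      rw [hms]
      exact hμnn _
  have hνz : ∀ z : ℝ, 0 ≤ z → ν z = μ (-(Real.sqrt z)) := by
    intro z hz
    have hs : Real.sqrt z ^ 2 = z := Real.sq_sqrt hz
    have hset : {y : ℝ | y ^ 2 = z} = {Real.sqrt z, -Real.sqrt z} := by
      ext y
      simp only [Set.mem_setOf_eq, Set.mem_insert_iff, Set.mem_singleton_iff]
      constructor
      · intro h
        have h2 : (y - Real.sqrt z) * (y + Real.sqrt z) = 0 := by
          have : y ^ 2 = Real.sqrt z ^ 2 := by rw [hs, h]
          nlinarith [this]
        rcases mul_eq_zero.1 h2 with h3 | h3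
        · left; linarith
        · right; linarith
      · rintro (rfl | rfl)
        · exact hs
        · rw [neg_pow]; simp [hs]
    rw [hν, hset, Set.image_insert_eq, Set.image_singleton, csSup_pair]
    exact max_eq_right (hkey _ (Real.sqrt_nonneg z))
  -- explicit formulas
  have hν1 : ∀ z : ℝ, 0 ≤ z → z ≤ c ^ 2 → ν z = (ar + Real.sqrt z) / (ar - c) := by
    intro z hz hzc
    have hs0 := Real.sqrt_nonneg z
    have hsle : Real.sqrt z ≤ -c := by
      calc Real.sqrt z ≤ Real.sqrt (c ^ 2) := Real.sqrt_le_sqrt hzc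
        _ = -c := hsqc
    rw [hνz z hz, hμ]
    split_ifs with ha hb
    · have hsc : Real.sqrt z = -c := le_antisymm hsle (by linarith [ha.2])
      rw [hsc]
      rw [div_eq_div_iff (by linarith) (by linarith)]
      ring
    · ring_nf
    · exact absurd ⟨by linarith, by linarith⟩ hb
  have hν2 : ∀ z : ℝ, c ^ 2 ≤ z → z ≤ al ^ 2 → ν z = (-(Real.sqrt z) - al) / (c - al) := by
    intro z h1 h2
    have hz : 0 ≤ z := le_trans (sq_nonneg c) h1
    have hsl : -c ≤ Real.sqrt z := by
      calc -c = Real.sqrt (c ^ 2) := hsqc.symm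
        _ ≤ Real.sqrt z := Real.sqrt_le_sqrt h1
    have hsu : Real.sqrt z ≤ -al := by
      calc Real.sqrt z ≤ Real.sqrt (al ^ 2) := Real.sqrt_le_sqrt h2
        _ = -al := hsqal
    rw [hνz z hz, hμ]
    split_ifs with ha
    · rfl
    · exact absurd ⟨by linarith, by linarith⟩ ha
    · exact absurd ⟨by linarith, by linarith⟩ ha
  have hν3 : ∀ z : ℝ, al ^ 2 < z → ν z = 0 := by
    intro z h
    have hz : 0 ≤ z := le_trans (sq_nonneg al) h.le
    have hsl : -al < Real.sqrt z := by
      calc -al = Real.sqrt (al ^ 2) := hsqal.symm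
        _ < Real.sqrt z := Real.sqrt_lt_sqrt (sq_nonneg al) h
    rw [hνz z hz, hμ]
    split_ifs with ha hb
    · exact absurd ha.1 (by linarith)
    · exact absurd hb.1 (by linarith)
    · rfl
  have hνle1 : ∀ z : ℝ, ν z ≤ 1 := by
    intro z
    rcases lt_or_ge z 0 with h | h
    · rw [hν0 z h]; norm_num
    rcases le_or_gt z (c ^ 2) with h' | h'
    · rw [hν1 z h h']
      rw [div_le_one hrc]
      have : Real.sqrt z ≤ -c := by
        calc Real.sqrt z ≤ Real.sqrt (c ^ 2) := Real.sqrt_le_sqrt h'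
          _ = -c := hsqc
      linarith
    rcases le_or_gt z (al ^ 2) with h'' | h''
    · rw [hν2 z h'.le h'']
      rw [div_le_one hca]
      have : -c ≤ Real.sqrt z := by
        calc -c = Real.sqrt (c ^ 2) := hsqc.symm
          _ ≤ Real.sqrt z := Real.sqrt_le_sqrt h'.le
      linarith
    · rw [hν3 z h'']; norm_num
  have hνnn : ∀ z : ℝ, 0 ≤ ν z := by
    intro z
    rcases lt_or_ge z 0 with h | h
    · rw [hν0 z h]
    · rw [hνz z h]; exact hμnn _
  have hνc2 : ν (c ^ 2) = 1 := by
    rw [hν1 (c ^ 2) (sq_nonneg c) le_rfl, hsqc]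
    rw [div_eq_one_iff_eq hrc.ne']
    ring
  -- the four sup computations
  have key1 : ∀ r : ℝ, 0 ≤ r → r ≤ c ^ 2 → sSup (ν '' {t : ℝ | t ≤ r}) = ν r := by
    intro r h0 hr
    apply IsGreatest.csSup_eq
    constructor
    · exact ⟨r, Set.mem_setOf.2 le_rfl, rfl⟩
    · rintro x ⟨t, ht, rfl⟩
      rcases lt_or_ge t 0 with h | h
      · rw [hν0 t h]; exact hνnn r
      · rw [hν1 t h (le_trans ht hr), hν1 r h0 hr]
        have := Real.sqrt_le_sqrt ht
        rw [div_le_div_iff₀ hrc hrc]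
        nlinarith
  have key2 : ∀ r : ℝ, c ^ 2 ≤ r → sSup (ν '' {t : ℝ | t ≤ r}) = 1 := by
    intro r hr
    apply IsGreatest.csSup_eq
    constructor
    · exact ⟨c ^ 2, Set.mem_setOf.2 hr, hνc2⟩
    · rintro x ⟨t, _, rfl⟩
      exact hνle1 t
  have key3 : ∀ r : ℝ, r ≤ c ^ 2 → sSup (ν '' {t : ℝ | r ≤ t}) = 1 := by
    intro r hr
    apply IsGreatest.csSup_eq
    constructor
    · exact ⟨c ^ 2, Set.mem_setOf.2 hr, hνc2⟩
    · rintro x ⟨t, _, rfl⟩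
      exact hνle1 t
  have key4 : ∀ r : ℝ, c ^ 2 ≤ r → r ≤ al ^ 2 → sSup (ν '' {t : ℝ | r ≤ t}) = ν r := by
    intro r h0 hr
    apply IsGreatest.csSup_eq
    constructor
    · exact ⟨r, Set.mem_setOf.2 le_rfl, rfl⟩
    · rintro x ⟨t, ht, rfl⟩
      rcases le_or_gt t (al ^ 2) with h | h
      · rw [hν2 t (le_trans h0 ht) h, hν2 r h0 hr]
        have := Real.sqrt_le_sqrt ht
        rw [div_le_div_iff₀ hca hca]
        nlinarith
      · rw [hν3 t h]; exact hνnn r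
  have key5 : ∀ r : ℝ, al ^ 2 < r → sSup (ν '' {t : ℝ | r ≤ t}) = 0 := by
    intro r hr
    apply IsGreatest.csSup_eq
    constructor
    · exact ⟨r, Set.mem_setOf.2 le_rfl, hν3 r hr⟩
    · rintro x ⟨t, ht, rfl⟩
      rw [hν3 t (lt_of_lt_of_le hr ht)]
  intro r
  refine ⟨?_, ?_, ?_⟩
  · intro h0 hr
    rw [hCr, key1 r h0 hr, key3 r hr]; ring
  · intro h0 hr
    rw [hCr, key2 r h0, key4 r h0 hr]; ring
  · intro hr
    rw [hCr, key2 r (le_trans hc2al2 hr.le), key5 r hr]; ring
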